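/- For β ∈ (0,1), λ > 0, let T_N = ∑_{i=1}^{N−1} Z_i^o with Z_i^o independent exponentials of rates λi, and t* = (1/λ)(log(N−1) − log(log(1/β))). Then P(T_N > t*) = 1 − (1 + log β/(N−1))^{N−1} → 1 − β as N → ∞; consequently the β-quantile of T_N is Θ((1/λ)(log N − log log(1/β))). -/

import Mathlib

open MeasureTheory ProbabilityTheory Filter
open Real

/-!
By Rényi's representation `T_N` has the law of the maximum of `N - 1` i.i.d. `Exp(λ)` variables,
`P(T_N ≤ t) = (1 - e^{-λt})^{N-1}`. Inductively, adding an independent `Exp(λ(n+1))` variable to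
one with CDF `(1 - e^{-λt})^n` gives CDF `(1 - e^{-λt})^{n+1}`, because
`-e^{-λ(n+1)x} (1 - e^{-λ(t-x)})^{n+1}` is an antiderivative of the convolution integrand.
At `t*` one has `e^{-λt*} = log(1/β)/(N-1)`, and `(1 + x/n)^n → e^x` gives the limit.
A `β`-quantile `q` solves `(1 - e^{-λq})^{N-1} = β`, i.e. `e^{-λq} = 1 - e^{-x}` with
`x = log(1/β)/(N-1)`; the bounds `x/(1+x) ≤ 1 - e^{-x} ≤ x` pin `λq` between
`log(N-1) - log log(1/β)` and `log(N-1+log(1/β)) - log log(1/β)`.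
-/

-- The CDF of the maximum of `n` i.i.d. `Exp(lam)` variables (for `n = 0`, of the constant `0`).
noncomputable def expMaxCDF (lam : ℝ) (n : ℕ) (t : ℝ) : ℝ :=
  if 0 ≤ t then (1 - exp (-(lam * t))) ^ n else 0

lemma measurable_expMaxCDF (lam : ℝ) (n : ℕ) : Measurable (expMaxCDF lam n) :=
  Measurable.ite measurableSet_Ici (by fun_prop) measurable_const

lemma expMaxCDF_nonneg {lam : ℝ} (hlam : 0 ≤ lam) (n : ℕ) (t : ℝ) :
    0 ≤ expMaxCDF lam n t := by
  unfold expMaxCDF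
  split_ifs with ht
  · exact pow_nonneg (sub_nonneg.mpr (exp_le_one_iff.mpr (by nlinarith))) n
  · exact le_rfl

lemma integral_exp_mul_one_sub_exp_pow (lam t : ℝ) (n : ℕ) :
    ∫ x in (0 : ℝ)..t, lam * (n + 1) * exp (-(lam * (n + 1) * x)) *
        (1 - exp (-(lam * (t - x)))) ^ n
      = (1 - exp (-(lam * t))) ^ (n + 1) := by
  set r := lam * (n + 1) with hr
  have hderiv : ∀ x,
      HasDerivAt (fun x => -(exp (-(r * x)) * (1 - exp (-(lam * (t - x)))) ^ (n + 1)))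
        (r * exp (-(r * x)) * (1 - exp (-(lam * (t - x)))) ^ n) x := by
    intro x
    have hE : HasDerivAt (fun x => exp (-(r * x))) (exp (-(r * x)) * -r) x := by
      simpa using ((hasDerivAt_id x).const_mul r).neg.exp
    have hU : HasDerivAt (fun x => exp (-(lam * (t - x)))) (exp (-(lam * (t - x))) * lam) x :=
      by
      simpa using (((hasDerivAt_id x).const_sub t).const_mul lam).neg.exp
    refine (hE.mul ((hU.const_sub 1).pow (n + 1))).neg.congr_deriv ?_
    rw [Nat.add_sub_cancel, hr, Pi.pow_apply]
    push_cast
    ring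
  rw [intervalIntegral.integral_eq_sub_of_hasDerivAt (fun x _ => hderiv x)
    ((by fun_prop : Continuous _).intervalIntegrable _ _)]
  simp

lemma lintegral_expMeasure_expMaxCDF_sub {lam : ℝ} (hlam : 0 ≤ lam) (n : ℕ) (t : ℝ) :
    ∫⁻ x, ENNReal.ofReal (expMaxCDF lam n (t - x)) ∂(expMeasure (lam * (n + 1)))
      = ENNReal.ofReal (expMaxCDF lam (n + 1) t) := by
  set f := fun x =>
    lam * (n + 1) * exp (-(lam * (n + 1) * x)) * (1 - exp (-(lam * (t - x)))) ^ n
  have hf : ∀ x ∈ Set.Icc 0 t, 0 ≤ f x := fun x hx => by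
    have : exp (-(lam * (t - x))) ≤ 1 := exp_le_one_iff.mpr (by nlinarith [hx.2])
    have : 0 ≤ 1 - exp (-(lam * (t - x))) := by linarith
    positivity
  have hdensity : ∀ x,
      exponentialPDF (lam * (n + 1)) x * ENNReal.ofReal (expMaxCDF lam n (t - x))
        = (Set.Icc 0 t).indicator (fun x => ENNReal.ofReal (f x)) x := by
    intro x
    by_cases hx : x ∈ Set.Icc 0 t
    · rw [Set.indicator_of_mem hx, exponentialPDF_eq, if_pos hx.1, expMaxCDF,
        if_pos (sub_nonneg.mpr hx.2), ← ENNReal.ofReal_mul (by positivity)]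
    · rw [Set.indicator_of_notMem hx, exponentialPDF_eq, expMaxCDF]
      rcases not_and_or.mp hx with hx0 | hxt
      · simp [hx0]
      · simp [sub_nonneg, hxt]
  have hexpMeasure :
      expMeasure (lam * (n + 1)) = volume.withDensity (exponentialPDF (lam * (n + 1))) := rfl
  have hmeas : Measurable fun x => ENNReal.ofReal (expMaxCDF lam n (t - x)) :=
    ((measurable_expMaxCDF lam n).comp (measurable_const.sub measurable_id)).ennreal_ofReal
  have hpdf : Measurable (exponentialPDF (lam * (n + 1))) :=
    (measurable_exponentialPDFReal _).ennreal_ofReal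
  rw [hexpMeasure, lintegral_withDensity_eq_lintegral_mul _ hpdf hmeas]
  simp only [Pi.mul_apply, hdensity]
  rw [lintegral_indicator measurableSet_Icc, expMaxCDF]
  split_ifs with ht
  · rw [← ofReal_integral_eq_lintegral_ofReal (by fun_prop : Continuous f).integrableOn_Icc
      ((ae_restrict_iff' measurableSet_Icc).mpr (ae_of_all _ hf)), integral_Icc_eq_integral_Ioc,
      ← intervalIntegral.integral_of_le ht, integral_exp_mul_one_sub_exp_pow]
  · simp [Set.Icc_eq_empty_of_lt (not_le.mp ht)]

section SumOfExponentials

variable {Ω : Type*} [MeasurableSpace Ω] {μ : Measure Ω}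

lemma ProbabilityTheory.IndepFun.measure_add_le [IsFiniteMeasure μ] {X Y : Ω → ℝ}
    (hX : Measurable X) (hY : Measurable Y) (hXY : IndepFun X Y μ) (t : ℝ) :
    μ {ω | X ω + Y ω ≤ t} = ∫⁻ y, μ {ω | X ω ≤ t - y} ∂(μ.map Y) := by
  have hs : MeasurableSet {p : ℝ × ℝ | p.1 + p.2 ≤ t} :=
    measurableSet_le (by fun_prop) (by fun_prop)
  have hpair : {ω | X ω + Y ω ≤ t} = (fun ω => (X ω, Y ω)) ⁻¹' {p | p.1 + p.2 ≤ t} :=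
    rfl
  rw [hpair, ← Measure.map_apply (hX.prodMk hY) hs,
    (indepFun_iff_map_prod_eq_prod_map_map hX.aemeasurable hY.aemeasurable).mp hXY,
    Measure.prod_apply_symm hs]
  refine lintegral_congr fun y => ?_
  have hslice : (fun x => (x, y)) ⁻¹' {p : ℝ × ℝ | p.1 + p.2 ≤ t} = Set.Iic (t - y) := by
    ext x
    simp [le_sub_iff_add_le]
  rw [hslice, Measure.map_apply hX measurableSet_Iic]
  rfl

lemma map_eq_expMeasure_of_measure_lt [IsProbabilityMeasure μ] {X : Ω → ℝ} (hX : Measurable X)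
    {r : ℝ} (hr : 0 < r)
    (h : ∀ x, 0 ≤ x → μ {ω | x < X ω} = ENNReal.ofReal (exp (-(r * x)))) :
    μ.map X = expMeasure r := by
  have := isProbabilityMeasure_expMeasure hr
  have hIic : ∀ x, 0 ≤ x → μ.map X (Set.Iic x) = ENNReal.ofReal (1 - exp (-(r * x))) := by
    intro x hx
    rw [Measure.map_apply hX measurableSet_Iic, ← Set.compl_Ioi, Set.preimage_compl,
      prob_compl_eq_one_sub (hX measurableSet_Ioi), ENNReal.ofReal_sub _ (exp_pos _).le,
      ENNReal.ofReal_one, ← h x hx]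
    rfl
  refine Measure.ext_of_Iic _ _ fun x => ?_
  rw [← ofReal_cdf (expMeasure r) x, cdf_expMeasure_eq hr]
  split_ifs with hx
  · exact hIic x hx
  · rw [ENNReal.ofReal_zero]
    refine measure_mono_null (μ := μ.map X) (Set.Iic_subset_Iic.mpr (not_le.mp hx).le) ?_
    simpa using hIic 0 le_rfl

variable [IsProbabilityMeasure μ] {lam : ℝ} {Z : ℕ → Ω → ℝ}

theorem measure_sum_range_le_eq_expMaxCDF (hlam : 0 < lam) (hmeas : ∀ i, Measurable (Z i))
    (hindep : iIndepFun Z μ)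
    (hexp : ∀ i : ℕ, ∀ x : ℝ, 0 ≤ x →
      μ {ω | x < Z i ω} = ENNReal.ofReal (exp (-(lam * ((i : ℝ) + 1)) * x)))
    (n : ℕ) (t : ℝ) :
    μ {ω | ∑ i ∈ Finset.range n, Z i ω ≤ t} = ENNReal.ofReal (expMaxCDF lam n t) := by
  induction n generalizing t with
  | zero => by_cases ht : 0 ≤ t <;> simp [expMaxCDF, ht]
  | succ n ih =>
    have hlaw : μ.map (Z n) = expMeasure (lam * (n + 1)) :=
      map_eq_expMeasure_of_measure_lt (hmeas n) (by positivity) fun x hx => by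
        rw [hexp n x hx, neg_mul]
    have hS : Measurable fun ω => ∑ i ∈ Finset.range n, Z i ω :=
      Finset.measurable_sum _ fun i _ => hmeas i
    have hindep_n : IndepFun (fun ω => ∑ i ∈ Finset.range n, Z i ω) (Z n) μ := by
      convert hindep.indepFun_sum_range_succ hmeas n
      simp
    simp only [Finset.sum_range_succ]
    rw [hindep_n.measure_add_le hS (hmeas n), hlaw]
    simp only [ih]
    exact lintegral_expMeasure_expMaxCDF_sub hlam.le n t

theorem measure_lt_sum_range_eq_one_sub_expMaxCDF (hlam : 0 < lam)
    (hmeas : ∀ i, Measurable (Z i)) (hindep : iIndepFun Z μ)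
    (hexp : ∀ i : ℕ, ∀ x : ℝ, 0 ≤ x →
      μ {ω | x < Z i ω} = ENNReal.ofReal (exp (-(lam * ((i : ℝ) + 1)) * x)))
    (n : ℕ) (t : ℝ) :
    μ {ω | t < ∑ i ∈ Finset.range n, Z i ω} = ENNReal.ofReal (1 - expMaxCDF lam n t) := by
  have hcompl : {ω | t < ∑ i ∈ Finset.range n, Z i ω}
      = {ω | ∑ i ∈ Finset.range n, Z i ω ≤ t}ᶜ := by
    ext
    simp
  have hS : Measurable fun ω => ∑ i ∈ Finset.range n, Z i ω :=
    Finset.measurable_sum _ fun i _ => hmeas i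
  rw [hcompl, prob_compl_eq_one_sub (measurableSet_le hS measurable_const),
    measure_sum_range_le_eq_expMaxCDF hlam hmeas hindep hexp,
    ENNReal.ofReal_sub _ (expMaxCDF_nonneg hlam.le _ _), ENNReal.ofReal_one]

end SumOfExponentials

lemma expMaxCDF_log_sub_log {lam s m : ℝ} (hlam : 0 < lam) (hs : 0 < s) (hsm : s ≤ m)
    (n : ℕ) :
    expMaxCDF lam n ((1 / lam) * (log m - log s)) = (1 - s / m) ^ n := by
  have hm : 0 < m := hs.trans_le hsm
  have ht : 0 ≤ (1 / lam) * (log m - log s) :=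
    mul_nonneg (by positivity) (sub_nonneg.mpr (log_le_log hs hsm))
  rw [expMaxCDF, if_pos ht, ← mul_assoc, mul_one_div_cancel hlam.ne', one_mul, neg_sub,
    exp_sub, exp_log hs, exp_log hm]

lemma tendsto_one_add_div_sub_one_pow (x : ℝ) :
    Tendsto (fun N : ℕ => (1 + x / ((N : ℝ) - 1)) ^ (N - 1)) atTop (nhds (exp x)) := by
  refine ((tendsto_one_add_div_pow_exp x).comp (tendsto_sub_atTop_nat 1)).congr' ?_
  filter_upwards [eventually_ge_atTop 1] with N hN
  simp [Nat.cast_sub hN]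

lemma div_one_add_le_one_sub_exp_neg {x : ℝ} (hx : 0 ≤ x) : x / (1 + x) ≤ 1 - exp (-x) := by
  have hexp : exp (-x) ≤ (1 + x)⁻¹ := by
    rw [exp_neg]
    exact inv_anti₀ (by positivity) (by linarith [add_one_le_exp x])
  have : 1 - (1 + x)⁻¹ = x / (1 + x) := by field_simp; ring
  linarith

lemma exp_neg_mul_eq_of_expMaxCDF_eq {lam s t : ℝ} (hlam : 0 ≤ lam) {m : ℕ} (hm : m ≠ 0)
    (h : expMaxCDF lam m t = exp (-s)) : exp (-(lam * t)) = 1 - exp (-(s / m)) := by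
  have ht : 0 ≤ t := by
    by_contra ht
    rw [expMaxCDF, if_neg ht] at h
    exact (exp_pos _).ne' h.symm
  rw [expMaxCDF, if_pos ht] at h
  have hu1 : 0 < 1 - exp (-(lam * t)) := by
    refine (sub_nonneg.mpr (exp_le_one_iff.mpr (by nlinarith))).lt_of_ne fun h0 => ?_
    rw [← h0, zero_pow hm] at h
    exact (exp_pos _).ne' h.symm
  have hlog := congrArg log h
  rw [log_pow, log_exp] at hlog
  rw [show -(s / m) = log (1 - exp (-(lam * t))) by field_simp; linarith, exp_log hu1]
  ring

lemma log_sub_log_le_mul_of_expMaxCDF_eq {lam s t : ℝ} (hlam : 0 ≤ lam) (hs : 0 < s) {m : ℕ}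
    (hm : m ≠ 0) (h : expMaxCDF lam m t = exp (-s)) :
    log m - log s ≤ lam * t ∧ lam * t ≤ log (m + s) - log s := by
  have hmpos : (0 : ℝ) < m := by positivity
  have hu := exp_neg_mul_eq_of_expMaxCDF_eq hlam hm h
  have hu_le : exp (-(lam * t)) ≤ s / m := by linarith [one_sub_le_exp_neg (s / m)]
  have hu_ge : s / (m + s) ≤ exp (-(lam * t)) := by
    have := div_one_add_le_one_sub_exp_neg (by positivity : 0 ≤ s / m)
    rwa [show s / m / (1 + s / m) = s / (m + s) by field_simp, ← hu] at this
  have hlow := log_le_log (exp_pos _) hu_le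
  have hup := log_le_log (by positivity) hu_ge
  rw [log_exp, log_div hs.ne' hmpos.ne'] at hlow
  rw [log_exp, log_div hs.ne' (by positivity)] at hup
  constructor <;> linarith

lemma eventually_le_mul_and_le_mul_of_log_bounds {lam s : ℝ} (hlam : 0 < lam) (hs : 0 < s) :
    ∀ᶠ N : ℕ in atTop, ∀ t : ℝ,
      log ((N : ℝ) - 1) - log s ≤ lam * t → lam * t ≤ log ((N : ℝ) - 1 + s) - log s →
      1 / 2 * ((1 / lam) * (log N - log s)) ≤ t ∧ t ≤ 2 * ((1 / lam) * (log N - log s)) := by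
  have hlog : Tendsto (fun N : ℕ => log N) atTop atTop :=
    tendsto_log_atTop.comp tendsto_natCast_atTop_atTop
  filter_upwards [eventually_ge_atTop 2,
    hlog.eventually_ge_atTop (log s + 2 * log 2 + 2 * log (1 + s))] with N hN hlogN t hlow hup
  have hN' : (2 : ℝ) ≤ N := by exact_mod_cast hN
  have hlow' : log N - log 2 ≤ log ((N : ℝ) - 1) := by
    rw [← log_div (by positivity) two_ne_zero]
    exact log_le_log (by positivity) (by linarith)
  have hup' : log ((N : ℝ) - 1 + s) ≤ log N + log (1 + s) := by
    rw [← log_mul (by positivity) (by positivity)]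
    exact log_le_log (by linarith) (by nlinarith)
  have h2 : 0 ≤ log 2 := log_nonneg one_le_two
  have h1s : 0 ≤ log (1 + s) := log_nonneg (by linarith)
  constructor
  · rw [show 1 / 2 * ((1 / lam) * (log N - log s)) = (log N - log s) / 2 / lam by ring,
      div_le_iff₀ hlam]
    linarith
  · rw [show 2 * ((1 / lam) * (log N - log s)) = 2 * (log N - log s) / lam by ring,
      le_div_iff₀ hlam]
    linarith

/-- Non-cooperative guaranteed time: for `T_N = ∑_{i=1}^{N−1} Z_i^o` with `Z_i^o` independent
exponential of rate `λi` and `t*_N = (1/λ)(log(N−1) − log(log(1/β)))`,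
`P(T_N > t*_N) = 1 − (1 + log β/(N−1))^{N−1} → 1 − β`; consequently the `β`-quantile of
`T_N` is `Θ((1/λ)(log N − log log(1/β)))`. -/
theorem stmt_18 {Ω : Type*} [MeasureSpace Ω] [IsProbabilityMeasure (ℙ : Measure Ω)]
    (β lam : ℝ) (hβ : β ∈ Set.Ioo (0 : ℝ) 1) (hlam : 0 < lam)
    (Z : ℕ → Ω → ℝ) (hmeas : ∀ i, Measurable (Z i))
    (hindep : iIndepFun (m := fun _ => (inferInstance : MeasurableSpace ℝ)) Z ℙ)
    (hexp : ∀ i : ℕ, ∀ x : ℝ, 0 ≤ x →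
      ℙ {ω | x < Z i ω} = ENNReal.ofReal (Real.exp (-(lam * ((i : ℝ) + 1)) * x)))
    (T : ℕ → Ω → ℝ) (hT : ∀ N ω, T N ω = ∑ i ∈ Finset.range (N - 1), Z i ω)
    (tstar : ℕ → ℝ)
    (htstar : ∀ N : ℕ, tstar N
      = (1 / lam) * (Real.log ((N : ℝ) - 1) - Real.log (Real.log (1 / β)))) :
    (∀ N : ℕ, 2 ≤ N → 0 < 1 + Real.log β / ((N : ℝ) - 1) →
      ℙ {ω | tstar N < T N ω}
        = ENNReal.ofReal (1 - (1 + Real.log β / ((N : ℝ) - 1)) ^ (N - 1))) ∧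
    Tendsto (fun N : ℕ => (ℙ {ω | tstar N < T N ω}).toReal) atTop (nhds (1 - β)) ∧
    (∃ c C : ℝ, ∃ N₀ : ℕ, 0 < c ∧ c ≤ C ∧ ∀ N : ℕ, N₀ ≤ N → ∀ t : ℝ,
      (ℙ {ω | T N ω ≤ t}).toReal = β →
      c * ((1 / lam) * (Real.log N - Real.log (Real.log (1 / β)))) ≤ t ∧
      t ≤ C * ((1 / lam) * (Real.log N - Real.log (Real.log (1 / β))))) := by
  obtain ⟨hβ0, hβ1⟩ := hβ
  set s := log (1 / β) with hs_def
  have hlogβ : log β = -s := by rw [hs_def, one_div, log_inv, neg_neg]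
  have hs : 0 < s := by linarith [log_neg hβ0 hβ1]
  have hcdf : ∀ N t, ℙ {ω | T N ω ≤ t} = ENNReal.ofReal (expMaxCDF lam (N - 1) t) :=
    fun N t => by
      simpa only [hT] using measure_sum_range_le_eq_expMaxCDF hlam hmeas hindep hexp _ t
  have htail : ∀ N : ℕ, s ≤ (N : ℝ) - 1 →
      ℙ {ω | tstar N < T N ω}
        = ENNReal.ofReal (1 - (1 + log β / ((N : ℝ) - 1)) ^ (N - 1)) := by
    intro N hN
    simp only [hT, htstar]
    rw [measure_lt_sum_range_eq_one_sub_expMaxCDF hlam hmeas hindep hexp,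
      expMaxCDF_log_sub_log hlam hs hN, hlogβ, neg_div, ← sub_eq_add_neg]
  refine ⟨fun N hN hpos => htail N ?_, ?_, ?_⟩
  · have hm : (0 : ℝ) < N - 1 := by linarith [show (2 : ℝ) ≤ N by exact_mod_cast hN]
    rw [hlogβ, neg_div, ← sub_eq_add_neg, sub_pos, div_lt_one hm] at hpos
    exact hpos.le
  · have hlim := (tendsto_one_add_div_sub_one_pow (log β)).const_sub 1
    rw [exp_log hβ0] at hlim
    have h := (ENNReal.tendsto_toReal ENNReal.ofReal_ne_top).comp (ENNReal.tendsto_ofReal hlim)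
    rw [ENNReal.toReal_ofReal (sub_nonneg.mpr hβ1.le)] at h
    refine h.congr' ?_
    filter_upwards [tendsto_natCast_atTop_atTop.eventually_ge_atTop (s + 1)] with N hN
    rw [htail N (by linarith), Function.comp_apply]
  · obtain ⟨N₀, hN₀⟩ := eventually_atTop.mp
      ((eventually_ge_atTop 2).and (eventually_le_mul_and_le_mul_of_log_bounds hlam hs))
    refine ⟨1 / 2, 2, N₀, by norm_num, by norm_num, fun N hN t ht => ?_⟩
    obtain ⟨hN2, hbounds⟩ := hN₀ N hN
    rw [hcdf, ENNReal.toReal_ofReal (expMaxCDF_nonneg hlam.le _ _), ← exp_log hβ0, hlogβ] at ht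
    obtain ⟨hlow, hup⟩ := log_sub_log_le_mul_of_expMaxCDF_eq hlam.le hs (by omega) ht
    rw [Nat.cast_sub (by omega), Nat.cast_one] at hlow hup
    exact hbounds t hlow hup
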